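/- Let m ≥ 2 and let A, B be complex random samples as in the context with 𝔼[A] = 0. Then the estimator c₃⁽ᶜᵈ⁾ = (m/(m−1))·( \overline{|A|²B} − \overline{|A|²}·B̄ ) satisfies 𝔼[c₃⁽ᶜᵈ⁾] = 𝔼[|A|²B] − 𝔼[|A|²]𝔼[B], which under the hypothesis 𝔼[A]=0 equals the third cumulant C₃(a, a*, b). -/

import Mathlib

open MeasureTheory ProbabilityTheory

noncomputable def cum3 {Ω : Type*} [MeasurableSpace Ω] (μ : MeasureTheory.Measure Ω)
    (x y z : Ω → ℂ) : ℂ :=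
  (∫ ω, x ω * y ω * z ω ∂μ)
  - (∫ ω, x ω * y ω ∂μ) * (∫ ω, z ω ∂μ)
  - (∫ ω, x ω * z ω ∂μ) * (∫ ω, y ω ∂μ)
  - (∫ ω, y ω * z ω ∂μ) * (∫ ω, x ω ∂μ)
  + 2 * (∫ ω, x ω ∂μ) * (∫ ω, y ω ∂μ) * (∫ ω, z ω ∂μ)

/-!
The estimator is the unbiased sample covariance of `Xᵢ = |Aᵢ|²` and `Yᵢ = Bᵢ`. In the expansion
of `(∑ Xᵢ)(∑ Yⱼ)` the `m` diagonal terms have mean `𝔼[XY]`, while by independence the `m(m - 1)`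
off-diagonal terms have mean `𝔼[X]𝔼[Y]`; the prefactor `m/(m - 1)` is exactly what removes the
resulting bias. Hölder's inequality for three `L³` factors makes `|A|²B` integrable. Finally, when
`𝔼[a] = 𝔼[a*] = 0` every lower-order term of the cumulant vanishes.
-/

lemma ENNReal.holderTriple_three_three : ENNReal.HolderTriple 3 3 (3 / 2) := by
  constructor
  rw [ENNReal.inv_div (by norm_num) (by norm_num), ENNReal.div_eq_inv_mul, ← two_mul, mul_comm]

lemma ENNReal.holderConjugate_three_halves_three : ENNReal.HolderConjugate (3 / 2) 3 := by
  constructor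
  rw [ENNReal.inv_div (by norm_num) (by norm_num), inv_one, ENNReal.div_eq_inv_mul, ← mul_add_one,
    show (2 + 1 : ENNReal) = 3 by norm_num, ENNReal.inv_mul_cancel (by norm_num) (by norm_num)]

lemma MeasureTheory.MemLp.integrable_mul_mul {Ω 𝕜 : Type*} [MeasurableSpace Ω] {μ : Measure Ω}
    [NormedRing 𝕜] {f g h : Ω → 𝕜} (hf : MemLp f 3 μ) (hg : MemLp g 3 μ) (hh : MemLp h 3 μ) :
    Integrable (fun ω => f ω * g ω * h ω) μ :=
  have := ENNReal.holderTriple_three_three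
  have := ENNReal.holderConjugate_three_halves_three
  (hg.mul' hf (r := 3 / 2)).integrable_mul hh

lemma ProbabilityTheory.IdentDistrib.mul_of_prodMk {Ω Ω' M : Type*} [MeasurableSpace Ω]
    [MeasurableSpace Ω'] [MeasurableSpace M] [Mul M] [MeasurableMul₂ M] {μ : Measure Ω}
    {ν : Measure Ω'} {f g : Ω → M} {f' g' : Ω' → M}
    (h : IdentDistrib (fun ω => (f ω, g ω)) (fun ω => (f' ω, g' ω)) μ ν) :
    IdentDistrib (fun ω => f ω * g ω) (fun ω => f' ω * g' ω) μ ν :=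
  h.comp measurable_mul

section IIDPairs

variable {Ω ι : Type*} [MeasurableSpace Ω] {μ : Measure Ω} {X Y : ι → Ω → ℂ} {i₀ : ι}

lemma integral_mul_eq_of_iIndepFun_of_ne
    (hindep : iIndepFun (fun i ω => (X i ω, Y i ω)) μ)
    (hident : ∀ i, IdentDistrib (fun ω => (X i ω, Y i ω)) (fun ω => (X i₀ ω, Y i₀ ω)) μ μ)
    {i j : ι} (hij : i ≠ j) :
    ∫ ω, X i ω * Y j ω ∂μ = (∫ ω, X i₀ ω ∂μ) * ∫ ω, Y i₀ ω ∂μ := by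
  have hXid : IdentDistrib (X i) (X i₀) μ μ := (hident i).comp measurable_fst
  have hYid : IdentDistrib (Y j) (Y i₀) μ μ := (hident j).comp measurable_snd
  have hXY : IndepFun (X i) (Y j) μ := (hindep.indepFun hij).comp measurable_fst measurable_snd
  rw [hXY.integral_fun_mul_eq_mul_integral hXid.aemeasurable_fst.aestronglyMeasurable
    hYid.aemeasurable_fst.aestronglyMeasurable, hXid.integral_eq, hYid.integral_eq]

lemma integrable_mul_of_iIndepFun
    (hindep : iIndepFun (fun i ω => (X i ω, Y i ω)) μ)
    (hident : ∀ i, IdentDistrib (fun ω => (X i ω, Y i ω)) (fun ω => (X i₀ ω, Y i₀ ω)) μ μ)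
    (hX : Integrable (X i₀) μ) (hY : Integrable (Y i₀) μ)
    (hXY : Integrable (fun ω => X i₀ ω * Y i₀ ω) μ) (i j : ι) :
    Integrable (fun ω => X i ω * Y j ω) μ := by
  rcases eq_or_ne i j with rfl | hij
  · exact (hident i).mul_of_prodMk.symm.integrable_snd hXY
  · have hXi : Integrable (X i) μ := ((hident i).comp measurable_fst).symm.integrable_snd hX
    have hYj : Integrable (Y j) μ := ((hident j).comp measurable_snd).symm.integrable_snd hY
    exact ((hindep.indepFun hij).comp measurable_fst measurable_snd).integrable_mul hXi hYj

variable [Fintype ι]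

lemma integral_sum_mul_of_identDistrib
    (hident : ∀ i, IdentDistrib (fun ω => (X i ω, Y i ω)) (fun ω => (X i₀ ω, Y i₀ ω)) μ μ)
    (hXY : Integrable (fun ω => X i₀ ω * Y i₀ ω) μ) :
    ∫ ω, ∑ i, X i ω * Y i ω ∂μ = Fintype.card ι * ∫ ω, X i₀ ω * Y i₀ ω ∂μ := by
  rw [integral_finsetSum _ fun i _ => (hident i).mul_of_prodMk.symm.integrable_snd hXY]
  simp_rw [(hident _).mul_of_prodMk.integral_eq, Finset.sum_const, Finset.card_univ, nsmul_eq_mul]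

lemma integral_sum_mul_sum_of_iIndepFun
    (hindep : iIndepFun (fun i ω => (X i ω, Y i ω)) μ)
    (hident : ∀ i, IdentDistrib (fun ω => (X i ω, Y i ω)) (fun ω => (X i₀ ω, Y i₀ ω)) μ μ)
    (hX : Integrable (X i₀) μ) (hY : Integrable (Y i₀) μ)
    (hXY : Integrable (fun ω => X i₀ ω * Y i₀ ω) μ) :
    ∫ ω, (∑ i, X i ω) * ∑ j, Y j ω ∂μ
      = Fintype.card ι * ∫ ω, X i₀ ω * Y i₀ ω ∂μ
        + Fintype.card ι * (Fintype.card ι - 1) * ((∫ ω, X i₀ ω ∂μ) * ∫ ω, Y i₀ ω ∂μ) := by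
  classical
  have hint := integrable_mul_of_iIndepFun hindep hident hX hY hXY
  have hrow (i : ι) : ∑ j, ∫ ω, X i ω * Y j ω ∂μ
      = ∫ ω, X i₀ ω * Y i₀ ω ∂μ + (Fintype.card ι - 1) * ((∫ ω, X i₀ ω ∂μ) * ∫ ω, Y i₀ ω ∂μ) := by
    rw [← Finset.add_sum_erase _ _ (Finset.mem_univ i), Finset.sum_congr rfl fun j hj =>
        integral_mul_eq_of_iIndepFun_of_ne hindep hident (Finset.ne_of_mem_erase hj).symm,
      Finset.sum_const, Finset.card_erase_of_mem (Finset.mem_univ i), Finset.card_univ,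
      nsmul_eq_mul, Nat.cast_pred (Fintype.card_pos_iff.mpr ⟨i⟩),
      (hident i).mul_of_prodMk.integral_eq]
  simp_rw [Finset.sum_mul_sum]
  rw [integral_finsetSum _ fun i _ => integrable_finsetSum _ fun j _ => hint i j]
  simp_rw [integral_finsetSum _ fun j _ => hint _ j, hrow, Finset.sum_const, Finset.card_univ,
    nsmul_eq_mul]
  ring

theorem integral_unbiased_sampleCov (hn : 2 ≤ Fintype.card ι)
    (hindep : iIndepFun (fun i ω => (X i ω, Y i ω)) μ)
    (hident : ∀ i, IdentDistrib (fun ω => (X i ω, Y i ω)) (fun ω => (X i₀ ω, Y i₀ ω)) μ μ)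
    (hX : Integrable (X i₀) μ) (hY : Integrable (Y i₀) μ)
    (hXY : Integrable (fun ω => X i₀ ω * Y i₀ ω) μ) :
    ∫ ω, ((Fintype.card ι : ℂ) / (Fintype.card ι - 1))
        * (((Fintype.card ι : ℂ)⁻¹ * ∑ i, X i ω * Y i ω)
          - ((Fintype.card ι : ℂ)⁻¹ * ∑ i, X i ω) * ((Fintype.card ι : ℂ)⁻¹ * ∑ i, Y i ω)) ∂μ
      = (∫ ω, X i₀ ω * Y i₀ ω ∂μ) - (∫ ω, X i₀ ω ∂μ) * ∫ ω, Y i₀ ω ∂μ := by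
  set n : ℂ := (Fintype.card ι : ℂ)
  have hn0 : n ≠ 0 := Nat.cast_ne_zero.mpr (by omega)
  have hn1 : n - 1 ≠ 0 := sub_ne_zero.mpr (Nat.cast_ne_one.mpr (by omega))
  have hint := integrable_mul_of_iIndepFun hindep hident hX hY hXY
  have hdiag : Integrable (fun ω => ∑ i, X i ω * Y i ω) μ :=
    integrable_finsetSum _ fun i _ => hint i i
  have hcross : Integrable (fun ω => (∑ i, X i ω) * ∑ j, Y j ω) μ := by
    simp_rw [Finset.sum_mul_sum]
    exact integrable_finsetSum _ fun i _ => integrable_finsetSum _ fun j _ => hint i j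
  calc _ = ∫ ω, n / (n - 1) * n⁻¹ * (∑ i, X i ω * Y i ω)
          - n / (n - 1) * n⁻¹ ^ 2 * ((∑ i, X i ω) * ∑ j, Y j ω) ∂μ := by
        congr 1; ext ω; ring
    _ = _ := by
        rw [integral_sub (hdiag.const_mul _) (hcross.const_mul _), integral_const_mul,
          integral_const_mul, integral_sum_mul_of_identDistrib hident hXY,
          integral_sum_mul_sum_of_iIndepFun hindep hident hX hY hXY]
        field_simp
        ring

end IIDPairs

theorem unbiased_c3_cd {Ω : Type*} [MeasurableSpace Ω] (μ : Measure Ω) [IsProbabilityMeasure μ]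
    (m : ℕ) (hm : 2 ≤ m)
    (A B : Fin m → Ω → ℂ)
    (hindep : iIndepFun (fun i ω => (A i ω, B i ω)) μ)
    (hident : ∀ i, IdentDistrib (fun ω => (A i ω, B i ω)) (fun ω => (A ⟨0, by omega⟩ ω, B ⟨0, by omega⟩ ω)) μ μ)
    (hA : MemLp (A ⟨0, by omega⟩) 3 μ)
    (hB : MemLp (B ⟨0, by omega⟩) 3 μ)
    (hEA : (∫ ω, A ⟨0, by omega⟩ ω ∂μ) = 0) :
    (∫ ω, ((m:ℂ) / ((m:ℂ)-1)) * (((m:ℂ)⁻¹ * ∑ i, A i ω * (starRingEnd ℂ) (A i ω) * B i ω) - ((m:ℂ)⁻¹ * ∑ i, A i ω * (starRingEnd ℂ) (A i ω)) * ((m:ℂ)⁻¹ * ∑ i, B i ω)) ∂μ) = (∫ ω, A ⟨0, by omega⟩ ω * (starRingEnd ℂ) (A ⟨0, by omega⟩ ω) * B ⟨0, by omega⟩ ω ∂μ) - (∫ ω, A ⟨0, by omega⟩ ω * (starRingEnd ℂ) (A ⟨0, by omega⟩ ω) ∂μ) * (∫ ω, B ⟨0, by omega⟩ ω ∂μ)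 ∧
    (∫ ω, A ⟨0, by omega⟩ ω * (starRingEnd ℂ) (A ⟨0, by omega⟩ ω) * B ⟨0, by omega⟩ ω ∂μ) - (∫ ω, A ⟨0, by omega⟩ ω * (starRingEnd ℂ) (A ⟨0, by omega⟩ ω) ∂μ) * (∫ ω, B ⟨0, by omega⟩ ω ∂μ) = cum3 μ (A ⟨0, by omega⟩) (fun ω => (starRingEnd ℂ) (A ⟨0, by omega⟩ ω)) (B ⟨0, by omega⟩) := by
  set i₀ : Fin m := ⟨0, by omega⟩
  have hφ : Measurable fun v : ℂ × ℂ => (v.1 * starRingEnd ℂ v.1, v.2) := by fun_prop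
  have hA2 : MemLp (A i₀) 2 μ := hA.mono_exponent (by norm_num)
  refine ⟨?_, ?_⟩
  · simpa only [Fintype.card_fin] using integral_unbiased_sampleCov (by simpa using hm)
      (hindep.comp _ fun _ => hφ) (fun i => (hident i).comp hφ) (hA2.integrable_mul hA2.star)
      (hB.integrable (by norm_num)) (hA.integrable_mul_mul hA.star hB)
  · have hconj : ∫ ω, starRingEnd ℂ (A i₀ ω) ∂μ = 0 := by rw [integral_conj, hEA, map_zero]
    simp only [cum3, hEA, hconj, mul_zero, zero_mul, sub_zero, add_zero]
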